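/- Lovász Local Lemma (general form): Let A_1,...,A_t be events with dependency graph Γ on vertex set {1,...,t} and edge set E, i.e., each A_i is independent of the collection {A_j : (i,j) ∉ E, j ≠ i}. If there exist reals 0 ≤ z_i < 1 with P(A_i) ≤ z_i ∏_{(i,j)∈E} (1 − z_j) for each i, then P(⋂_i A_i^c) ≥ ∏_{i=1}^t (1 − z_i) > 0. -/

import Mathlib

/-!
Write `N S = ⋂ j ∈ S, (A j)ᶜ`. By strong induction on `S`, `P(A i ∩ N S) ≤ z i · P(N S)` for
`i ∉ S` (i.e. `P(A i | N S) ≤ z i`): split `S` into the neighbours and the non-neighbours of `i`.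
`A i` is independent of `N others`, while peeling the neighbours off one at a time, each time
with the induction hypothesis, gives `P(N S) ≥ ∏ neighbours (1 - z j) · P(N others)`; the
hypothesis on `P(A i)` then closes the induction. Peeling off all events in the same way gives
`P(N univ) ≥ ∏ (1 - z i)`.
-/

open MeasureTheory ProbabilityTheory MeasurableSpace

namespace LovaszLocalLemma

variable {Ω ι : Type*} [MeasurableSpace Ω] {μ : Measure Ω}

/-- Independence of `a` from all finite intersections of the `B j`, `j ∈ T`, passes to the
generated σ-algebra, which contains the intersections of the complements. -/
theorem measure_inter_biInter_compl_eq_mul [IsZeroOrProbabilityMeasure μ] {a : Set Ω}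
    {B : ι → Set Ω} (ha : MeasurableSet a) (hB : ∀ j, MeasurableSet (B j)) {T : Set ι}
    (h : ∀ S : Finset ι, ↑S ⊆ T → μ (a ∩ ⋂ j ∈ S, B j) = μ a * μ (⋂ j ∈ S, B j))
    {S : Finset ι} (hS : ↑S ⊆ T) :
    μ (a ∩ ⋂ j ∈ S, (B j)ᶜ) = μ a * μ (⋂ j ∈ S, (B j)ᶜ) := by
  have hsets : IndepSets {a} (piiUnionInter (fun j => {B j}) T) μ := by
    rw [piiUnionInter_singleton_left, IndepSets_iff]
    rintro _ _ rfl ⟨S', hS', rfl⟩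
    exact h S' hS'
  have hmeas : ∀ s ∈ piiUnionInter (fun j => {B j}) T, MeasurableSet s := by
    rw [piiUnionInter_singleton_left]
    rintro _ ⟨S', -, rfl⟩
    exact Finset.measurableSet_biInter S' fun j _ => hB j
  have hindep := hsets.indep' (by simpa using ha) hmeas
    (IsPiSystem.singleton a) (isPiSystem_piiUnionInter _ (fun j => IsPiSystem.singleton _) T)
  rw [generateFrom_piiUnionInter_singleton_left] at hindep
  refine (Indep_iff _ _ μ).1 hindep _ _ (measurableSet_generateFrom rfl) ?_
  refine Finset.measurableSet_biInter S fun j hj => (measurableSet_generateFrom ?_).compl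
  exact ⟨j, hS hj, rfl⟩

variable {A : ι → Set Ω} {z : ι → ℝ} [DecidableEq ι]

section Peeling

variable [IsFiniteMeasure μ]

theorem mul_measureReal_le_measureReal_biInter_compl_insert {k : ι} (hk : MeasurableSet (A k))
    {S : Finset ι} (hbound : μ.real (A k ∩ ⋂ j ∈ S, (A j)ᶜ) ≤ z k * μ.real (⋂ j ∈ S, (A j)ᶜ)) :
    (1 - z k) * μ.real (⋂ j ∈ S, (A j)ᶜ) ≤ μ.real (⋂ j ∈ insert k S, (A j)ᶜ) := by
  have hsplit := measureReal_inter_add_sdiff (μ := μ) (s := ⋂ j ∈ S, (A j)ᶜ) hk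
  rw [Set.inter_comm] at hsplit
  rw [Finset.set_biInter_insert, ← Set.sdiff_eq_compl_inter]
  linarith

theorem prod_mul_measureReal_le_measureReal_biInter_compl (hA : ∀ i, MeasurableSet (A i))
    (hz1 : ∀ i, z i ≤ 1) {D T : Finset ι} (hDT : Disjoint D T)
    (hbound : ∀ U ⊂ D ∪ T, ∀ k ∉ U,
      μ.real (A k ∩ ⋂ j ∈ U, (A j)ᶜ) ≤ z k * μ.real (⋂ j ∈ U, (A j)ᶜ)) :
    (∏ j ∈ D, (1 - z j)) * μ.real (⋂ j ∈ T, (A j)ᶜ) ≤ μ.real (⋂ j ∈ D ∪ T, (A j)ᶜ) := by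
  induction D using Finset.induction_on with
  | empty => simp
  | @insert k D hkD ih =>
    rw [Finset.disjoint_insert_left] at hDT
    have hkDT : k ∉ D ∪ T := by simp [hkD, hDT.1]
    have hsub : D ∪ T ⊂ insert k D ∪ T := by
      rw [Finset.insert_union]; exact Finset.ssubset_insert hkDT
    have ih' := ih hDT.2 fun U hU => hbound U (hU.trans hsub)
    calc (∏ j ∈ insert k D, (1 - z j)) * μ.real (⋂ j ∈ T, (A j)ᶜ)
        = (1 - z k) * ((∏ j ∈ D, (1 - z j)) * μ.real (⋂ j ∈ T, (A j)ᶜ)) := by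
          rw [Finset.prod_insert hkD, mul_assoc]
      _ ≤ (1 - z k) * μ.real (⋂ j ∈ D ∪ T, (A j)ᶜ) :=
          mul_le_mul_of_nonneg_left ih' (sub_nonneg.2 (hz1 k))
      _ ≤ μ.real (⋂ j ∈ insert k D ∪ T, (A j)ᶜ) := by
          rw [Finset.insert_union]
          exact mul_measureReal_le_measureReal_biInter_compl_insert (hA k)
            (hbound _ hsub k hkDT)

end Peeling

theorem measureReal_inter_biInter_compl_le [IsProbabilityMeasure μ] [Fintype ι]
    {E : ι → ι → Prop} [DecidableRel E] (hA : ∀ i, MeasurableSet (A i))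
    (hdep : ∀ i : ι, ∀ S : Finset ι, (∀ j ∈ S, j ≠ i ∧ ¬ E i j) →
      μ (A i ∩ ⋂ j ∈ S, A j) = μ (A i) * μ (⋂ j ∈ S, A j))
    (hz0 : ∀ i, 0 ≤ z i) (hz1 : ∀ i, z i ≤ 1)
    (hmain : ∀ i, μ.real (A i) ≤ z i * ∏ j ∈ Finset.univ.filter (fun j => E i j), (1 - z j))
    (S : Finset ι) : ∀ i ∉ S,
      μ.real (A i ∩ ⋂ j ∈ S, (A j)ᶜ) ≤ z i * μ.real (⋂ j ∈ S, (A j)ᶜ) := by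
  induction S using Finset.strongInduction with
  | H S ih =>
    intro i hi
    set neighbours := S.filter (E i)
    set others := S.filter (¬ E i ·)
    have hS : neighbours ∪ others = S := Finset.filter_union_filter_not_eq _ S
    have hindep : μ.real (A i ∩ ⋂ j ∈ others, (A j)ᶜ)
        = μ.real (A i) * μ.real (⋂ j ∈ others, (A j)ᶜ) := by
      simp only [measureReal_def, ← ENNReal.toReal_mul]
      refine congrArg _ (measure_inter_biInter_compl_eq_mul (hA i) hA (hdep i) ?_)
      intro j hj
      rw [Finset.coe_filter] at hj
      exact ⟨ne_of_mem_of_not_mem hj.1 hi, hj.2⟩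
    have hchain : (∏ j ∈ neighbours, (1 - z j)) * μ.real (⋂ j ∈ others, (A j)ᶜ)
        ≤ μ.real (⋂ j ∈ S, (A j)ᶜ) := by
      rw [← hS]
      exact prod_mul_measureReal_le_measureReal_biInter_compl hA hz1
        (Finset.disjoint_filter_filter_not S S _) (fun U hU => ih U (hS ▸ hU))
    have hprod : ∏ j ∈ Finset.univ.filter (E i), (1 - z j) ≤ ∏ j ∈ neighbours, (1 - z j) :=
      Finset.prod_le_prod_of_subset_of_le_one
        (Finset.filter_subset_filter _ (Finset.subset_univ S))
        (fun j _ => sub_nonneg.2 (hz1 j)) (fun j _ _ => sub_le_self _ (hz0 j))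
    calc μ.real (A i ∩ ⋂ j ∈ S, (A j)ᶜ)
        ≤ μ.real (A i ∩ ⋂ j ∈ others, (A j)ᶜ) :=
          measureReal_mono (Set.inter_subset_inter_right _
            (Set.biInter_subset_biInter_left (Finset.filter_subset _ S)))
      _ = μ.real (A i) * μ.real (⋂ j ∈ others, (A j)ᶜ) := hindep
      _ ≤ z i * (∏ j ∈ neighbours, (1 - z j)) * μ.real (⋂ j ∈ others, (A j)ᶜ) := by
          gcongr
          exact (hmain i).trans (mul_le_mul_of_nonneg_left hprod (hz0 i))
      _ ≤ z i * μ.real (⋂ j ∈ S, (A j)ᶜ) := by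
          rw [mul_assoc]
          exact mul_le_mul_of_nonneg_left hchain (hz0 i)

end LovaszLocalLemma

open LovaszLocalLemma in
theorem stmt_1_general {Ω : Type*} [MeasurableSpace Ω] (μ : Measure Ω) [IsProbabilityMeasure μ]
    (t : ℕ) (A : Fin t → Set Ω) (hA : ∀ i, MeasurableSet (A i))
    (E : Fin t → Fin t → Prop) [DecidableRel E]
    (hdep : ∀ i : Fin t, ∀ S : Finset (Fin t),
      (∀ j ∈ S, j ≠ i ∧ ¬ E i j) →
        μ (A i ∩ ⋂ j ∈ S, A j) = μ (A i) * μ (⋂ j ∈ S, A j))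
    (z : Fin t → ℝ) (hz0 : ∀ i, 0 ≤ z i) (hz1 : ∀ i, z i < 1)
    (hmain : ∀ i, (μ (A i)).toReal ≤
      z i * ∏ j ∈ Finset.univ.filter (fun j => E i j), (1 - z j)) :
    (μ (⋂ i, (A i)ᶜ)).toReal ≥ ∏ i, (1 - z i) ∧ (0 : ℝ) < ∏ i, (1 - z i) := by
  have hz1' : ∀ i, z i ≤ 1 := fun i => (hz1 i).le
  have hchain := prod_mul_measureReal_le_measureReal_biInter_compl (μ := μ) hA hz1'
    (Finset.disjoint_empty_right Finset.univ)
    fun U _ => measureReal_inter_biInter_compl_le hA hdep hz0 hz1' hmain U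
  simp only [Finset.union_empty, Finset.notMem_empty, Set.iInter_of_empty, Set.iInter_univ,
    probReal_univ, mul_one, Finset.mem_univ, Set.iInter_true] at hchain
  exact ⟨hchain, Finset.prod_pos fun i _ => sub_pos.2 (hz1 i)⟩

/-- Lovász Local Lemma (general form). `E` is the adjacency relation of the
dependency graph: each `A i` is mutually independent of the family of events
`A j` with `j ≠ i` and `¬ E i j`, expressed by the product formula over all
finite subcollections of non-neighbours. -/
theorem stmt_1 {Ω : Type*} [MeasurableSpace Ω] (μ : Measure Ω) [IsProbabilityMeasure μ]
    (t : ℕ) (A : Fin t → Set Ω) (hA : ∀ i, MeasurableSet (A i))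
    (E : Fin t → Fin t → Prop) [DecidableRel E] (hsymm : ∀ i j, E i j → E j i)
    (hdep : ∀ i : Fin t, ∀ S : Finset (Fin t),
      (∀ j ∈ S, j ≠ i ∧ ¬ E i j) →
        μ (A i ∩ ⋂ j ∈ S, A j) = μ (A i) * μ (⋂ j ∈ S, A j))
    (z : Fin t → ℝ) (hz0 : ∀ i, 0 ≤ z i) (hz1 : ∀ i, z i < 1)
    (hmain : ∀ i, (μ (A i)).toReal ≤
      z i * ∏ j ∈ Finset.univ.filter (fun j => E i j), (1 - z j)) :
    (μ (⋂ i, (A i)ᶜ)).toReal ≥ ∏ i, (1 - z i) ∧ (0 : ℝ) < ∏ i, (1 - z i) :=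
  stmt_1_general μ t A hA E hdep z hz0 hz1 hmain
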